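/- Assume A₁ = [0,p] ∪ [q,d] as sets of integers, with p ≥ 1, p + 2 ≤ q < d and p ≤ d − q. Then reg = ⌈(q−1)/p⌉. -/
import Mathlib


namespace ProjMonomialCurve

/-- The numerical semigroup generated by `a 1, …, a k` (equivalently by `A₁ = {0,a 1,…,a k}`). -/
def S1 (k : ℕ) (a : ℕ → ℕ) : Set ℕ :=
  {n | ∃ x : ℕ → ℕ, n = ∑ i ∈ Finset.Icc 1 k, x i * a i}

/-- The numerical semigroup generated by the nonzero elements `d - a i` (`0 ≤ i ≤ k-1`)
of `A₂`, where `d = a k`. -/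
def S2 (k : ℕ) (a : ℕ → ℕ) : Set ℕ :=
  {n | ∃ x : ℕ → ℕ, n = ∑ i ∈ Finset.range k, x i * (a k - a i)}

/-- `δ₁ n`: least total number of summands over representations `n = ∑ xᵢ aᵢ`. -/
noncomputable def delta1 (k : ℕ) (a : ℕ → ℕ) (n : ℕ) : ℕ :=
  sInf {m | ∃ x : ℕ → ℕ, n = ∑ i ∈ Finset.Icc 1 k, x i * a i ∧ m = ∑ i ∈ Finset.Icc 1 k, x i}

/-- `δ₂ n`: least total number of summands over representations of `n` by the
nonzero elements of `A₂`. -/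
noncomputable def delta2 (k : ℕ) (a : ℕ → ℕ) (n : ℕ) : ℕ :=
  sInf {m | ∃ x : ℕ → ℕ,
    n = ∑ i ∈ Finset.range k, x i * (a k - a i) ∧ m = ∑ i ∈ Finset.range k, x i}

/-- `ω₁ i`: the least element of `S₍₁₎` congruent to `i` modulo `d = a k`. -/
noncomputable def omega1 (k : ℕ) (a : ℕ → ℕ) (i : ℕ) : ℕ :=
  sInf {n | n ∈ S1 k a ∧ n % a k = i % a k}

/-- `ω₂ i`: the least element of `S₍₂₎` congruent to `i` modulo `d = a k`. -/
noncomputable def omega2 (k : ℕ) (a : ℕ → ℕ) (i : ℕ) : ℕ :=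
  sInf {n | n ∈ S2 k a ∧ n % a k = i % a k}

/-- `w i = (ω₁(i), ω₂(d-i))`. -/
noncomputable def w (k : ℕ) (a : ℕ → ℕ) (i : ℕ) : ℕ × ℕ :=
  (omega1 k a i, omega2 k a (a k - i))

/-- `e h = (h, d - h)`. -/
def e (k : ℕ) (a : ℕ → ℕ) (h : ℕ) : ℕ × ℕ := (h, a k - h)

/-- The affine semigroup `S ⊆ ℕ²` generated by `e (a 0), …, e (a k)`. -/
def S (k : ℕ) (a : ℕ → ℕ) : Set (ℕ × ℕ) :=
  {u | ∃ x : ℕ → ℕ, u = ∑ i ∈ Finset.range (k+1), x i • e k a (a i)}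

/-- `S' = {u ∈ ℕ² | u + p•e₀ ∈ S and u + p•e_d ∈ S for some p ∈ ℕ}`. -/
def S' (k : ℕ) (a : ℕ → ℕ) : Set (ℕ × ℕ) :=
  {u | ∃ p : ℕ, u + p • e k a 0 ∈ S k a ∧ u + p • e k a (a k) ∈ S k a}

/-- `deg u = (u₁ + u₂)/d` for `u ∈ ℕ²`. -/
def deg (k : ℕ) (a : ℕ → ℕ) (u : ℕ × ℕ) : ℕ := (u.1 + u.2) / a k

/-- The index set `𝕀`. -/
noncomputable def II (k : ℕ) (a : ℕ → ℕ) : Set ℕ :=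
  {i | 1 ≤ i ∧ i ≤ a k - 1 ∧ (∀ j, 1 ≤ j → j ≤ k - 1 → i ≠ a j) ∧
    deg k a (w k a i) < delta1 k a (w k a i).1}

/-- `T = {u ∈ ℤ² | d ∣ u₁+u₂, u₁ ∉ S₍₁₎, u₂ ∉ S₍₂₎}`. -/
def T (k : ℕ) (a : ℕ → ℕ) : Set (ℤ × ℤ) :=
  {u | (a k : ℤ) ∣ u.1 + u.2 ∧ (∀ n ∈ S1 k a, (n : ℤ) ≠ u.1) ∧ (∀ n ∈ S2 k a, (n : ℤ) ≠ u.2)}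

/-- `deg` for integer points. -/
def degZ (k : ℕ) (a : ℕ → ℕ) (u : ℤ × ℤ) : ℤ := (u.1 + u.2) / (a k : ℤ)

/-- The Castelnuovo–Mumford regularity, expressed combinatorially:
`max({deg u + 1 : u ∈ S'∖S} ∪ {deg u + 2 : u ∈ T})`. -/
noncomputable def reg (k : ℕ) (a : ℕ → ℕ) : ℤ :=
  sSup ({z : ℤ | ∃ u ∈ S' k a \ S k a, z = (deg k a u : ℤ) + 1} ∪
        {z : ℤ | ∃ u ∈ T k a, z = degZ k a u + 2})

/-- Frobenius number of `S₍₁₎` (greatest integer not in it; `-1` if the semigroup is all of `ℕ`). -/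
noncomputable def F1 (k : ℕ) (a : ℕ → ℕ) : ℤ :=
  sSup {z : ℤ | ∀ n ∈ S1 k a, (n : ℤ) ≠ z}

/-- Frobenius number of `S₍₂₎`. -/
noncomputable def F2 (k : ℕ) (a : ℕ → ℕ) : ℤ :=
  sSup {z : ℤ | ∀ n ∈ S2 k a, (n : ℤ) ≠ z}

/-- The largest gap `λ_max = max_{1 ≤ i ≤ k} (a i - a (i-1) - 1)`. -/
def lamMax (k : ℕ) (a : ℕ → ℕ) : ℕ :=
  (Finset.Icc 1 k).sup (fun i => a i - a (i-1) - 1)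

/-- The second largest gap: the minimum over `i` of the largest gap among indices `≠ i`. -/
noncomputable def lamSl (k : ℕ) (a : ℕ → ℕ) : ℕ :=
  sInf {m | ∃ i, 1 ≤ i ∧ i ≤ k ∧
    m = ((Finset.Icc 1 k).erase i).sup (fun j => a j - a (j-1) - 1)}

/-- The set `A₁ = {a 0, a 1, …, a k}`. -/
def A1set (k : ℕ) (a : ℕ → ℕ) : Set ℕ := {m | ∃ j ≤ k, a j = m}


section Aux

variable {k : ℕ} {a : ℕ → ℕ}

lemma S_add {u v : ℕ × ℕ} (hu : u ∈ S k a) (hv : v ∈ S k a) : u + v ∈ S k a := by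
  obtain ⟨x, hx⟩ := hu
  obtain ⟨y, hy⟩ := hv
  refine ⟨fun i => x i + y i, ?_⟩
  rw [hx, hy, ← Finset.sum_add_distrib]
  exact Finset.sum_congr rfl fun i _ => (add_smul (x i) (y i) _).symm

lemma S_gen {i : ℕ} (hik : i ≤ k) : e k a (a i) ∈ S k a := by
  refine ⟨fun j => if j = i then 1 else 0, ?_⟩
  rw [Finset.sum_eq_single i]
  · simp
  · intro b _ hb
    simp [hb]
  · intro h
    exact absurd (Finset.mem_range.2 (Nat.lt_succ_of_le hik)) h

lemma S_total (hbound : ∀ i, i ≤ k → a i ≤ a k) {u : ℕ × ℕ} (hu : u ∈ S k a) :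
    ∃ x : ℕ → ℕ, u.1 = ∑ i ∈ Finset.range (k+1), x i * a i ∧
      u.1 + u.2 = (∑ i ∈ Finset.range (k+1), x i) * a k := by
  obtain ⟨x, hx⟩ := hu
  have h1 : u.1 = ∑ i ∈ Finset.range (k+1), x i * a i := by
    rw [hx, Prod.fst_sum]
    exact Finset.sum_congr rfl fun i _ => by simp [e, smul_eq_mul]
  have h2 : u.2 = ∑ i ∈ Finset.range (k+1), x i * (a k - a i) := by
    rw [hx, Prod.snd_sum]
    exact Finset.sum_congr rfl fun i _ => by simp [e, smul_eq_mul]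
  refine ⟨x, h1, ?_⟩
  rw [h1, h2, ← Finset.sum_add_distrib, Finset.sum_mul]
  refine Finset.sum_congr rfl fun i hi => ?_
  have hik : a i ≤ a k := hbound i (Nat.lt_succ_iff.1 (Finset.mem_range.1 hi))
  have : a i + (a k - a i) = a k := by omega
  rw [← Nat.mul_add, this]

lemma rep_mem (p q : ℕ) (hp : 1 ≤ p) (hqd : q ≤ a k) (hpq : p < q)
    (havail : ∀ v, v ≤ p ∨ (q ≤ v ∧ v ≤ a k) → ∃ j ≤ k, a j = v) :
    ∀ m j s, j ≤ m → j * q ≤ s → s ≤ j * a k + (m - j) * p →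
      (s, m * a k - s) ∈ S k a := by
  have hpd : p ≤ a k := le_trans (Nat.le_of_lt hpq) hqd
  intro m
  induction m with
  | zero =>
    intro j s hj h1 h2
    have hj0 : j = 0 := Nat.le_zero.mp hj
    subst hj0
    simp only [Nat.zero_mul, Nat.zero_sub, Nat.zero_add] at h2
    have hs : s = 0 := by omega
    subst hs
    exact ⟨fun _ => 0, by simp⟩
  | succ m ih =>
    intro j s hj h1 h2
    obtain _ | j' := j
    · -- j = 0
      have e1 : (m+1) * p = m * p + p := by ring
      have e2 : (m+1) * a k = m * a k + a k := by ring
      have e3 : m * p ≤ m * a k := Nat.mul_le_mul (le_refl _) hpd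
      simp only [Nat.zero_mul, Nat.zero_add, Nat.sub_zero] at h2
      obtain ⟨i, hik, hiv⟩ := havail (min s p) (Or.inl (min_le_right s p))
      have hrec : (s - min s p, m * a k - (s - min s p)) ∈ S k a := by
        refine ih 0 (s - min s p) (Nat.zero_le m) (by simp) ?_
        simp only [Nat.zero_mul, Nat.zero_add, Nat.sub_zero]
        omega
      have hsum := S_add (S_gen hik) hrec
      have heq : (s, (m+1) * a k - s) = e k a (a i) + (s - min s p, m * a k - (s - min s p)) := by
        rw [hiv, Prod.ext_iff]
        constructor
        · simp only [e, Prod.fst_add, Prod.snd_add]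
          omega
        · simp only [e, Prod.fst_add, Prod.snd_add]
          omega
      rw [heq]; exact hsum
    · -- j = j' + 1
      have hj'm : j' ≤ m := by omega
      have hmj : m + 1 - (j' + 1) = m - j' := by omega
      rw [hmj] at h2
      have e1 : (j'+1) * q = j' * q + q := by ring
      have e2 : (j'+1) * a k = j' * a k + a k := by ring
      have e3 : (m+1) * a k = m * a k + a k := by ring
      have e4 : j' * a k + (m - j') * a k = m * a k := by
        rw [← Nat.add_mul]
        congr 1
        omega
      have e5 : j' * q ≤ j' * a k := Nat.mul_le_mul (le_refl _) hqd
      have e6 : (m - j') * p ≤ (m - j') * a k := Nat.mul_le_mul (le_refl _) hpd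
      rw [e1] at h1
      rw [e2] at h2
      set v := max q (s - (j' * a k + (m - j') * p)) with hv
      have hvq : q ≤ v := le_max_left _ _
      have hvd : v ≤ a k := by omega
      have hvs : v ≤ s := by omega
      have hs1 : j' * q ≤ s - v := by omega
      have hs2 : s - v ≤ j' * a k + (m - j') * p := by omega
      obtain ⟨i, hik, hiv⟩ := havail v (Or.inr ⟨hvq, hvd⟩)
      have hrec := ih j' (s - v) hj'm hs1 hs2
      have hsum := S_add (S_gen hik) hrec
      have heq : (s, (m+1) * a k - s) = e k a (a i) + (s - v, m * a k - (s - v)) := by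
        rw [hiv, Prod.ext_iff]
        constructor
        · simp only [e, Prod.fst_add, Prod.snd_add]
          omega
        · simp only [e, Prod.fst_add, Prod.snd_add]
          omega
      rw [heq]; exact hsum

lemma cover (p q : ℕ) (hdq : q + p ≤ a k) :
    ∀ N s, s ≤ N * a k → q ≤ N * p + 1 →
      ∃ j, j ≤ N ∧ j * q ≤ s ∧ s ≤ j * a k + (N - j) * p := by
  intro N s hs hqN
  have hex : ∃ j, s ≤ j * a k + (N - j) * p := ⟨N, by simpa using hs⟩
  have hspec := Nat.find_spec hex
  have hle : Nat.find hex ≤ N := Nat.find_le (by simpa using hs)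
  rcases Nat.eq_zero_or_pos (Nat.find hex) with h0 | h0
  · rw [h0] at hspec
    exact ⟨0, Nat.zero_le N, by simp, hspec⟩
  · obtain ⟨j1, hj1⟩ : ∃ j1, Nat.find hex = j1 + 1 := ⟨Nat.find hex - 1, by omega⟩
    have hmin := Nat.find_min hex (m := j1) (by omega)
    push_neg at hmin
    rw [hj1] at hspec hle
    have e1 : (j1+1) * q = j1 * q + q := by ring
    have e2 : j1 * (q + p) ≤ j1 * a k := Nat.mul_le_mul (le_refl _) hdq
    have e3 : j1 * (q + p) = j1 * q + j1 * p := by ring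
    have e4 : j1 * p + (N - j1) * p = N * p := by
      rw [← Nat.add_mul]
      congr 1
      omega
    exact ⟨j1 + 1, hle, by omega, hspec⟩

end Aux
theorem statement_15 (k : ℕ) (a : ℕ → ℕ) (hk : 3 ≤ k) (ha0 : a 0 = 0)
    (hmono : ∀ i, i < k → a i < a (i+1)) (hgcd : (Finset.Icc 1 k).gcd a = 1)
    (p q : ℕ) (hp : 1 ≤ p) (hpq : p + 2 ≤ q) (hq : q < a k) (hpd : p ≤ a k - q)
    (hA1 : A1set k a = Set.Icc 0 p ∪ Set.Icc q (a k)) :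
    reg k a = ⌈((q : ℚ) - 1) / (p : ℚ)⌉ := by
  have hd : q + p ≤ a k := by omega
  have hpltq : p < q := by omega
  have hdpos : 0 < a k := by omega
  have havail : ∀ v, v ≤ p ∨ (q ≤ v ∧ v ≤ a k) → ∃ j ≤ k, a j = v := by
    intro v hv
    have hm : v ∈ A1set k a := by
      rw [hA1]
      rcases hv with h | h
      · exact Or.inl (Set.mem_Icc.2 ⟨Nat.zero_le v, h⟩)
      · exact Or.inr (Set.mem_Icc.2 h)
    exact hm
  have hforward : ∀ i, i ≤ k → a i ≤ p ∨ (q ≤ a i ∧ a i ≤ a k) := by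
    intro i hi
    have hm : a i ∈ A1set k a := ⟨i, hi, rfl⟩
    rw [hA1] at hm
    rcases hm with h | h
    · exact Or.inl (Set.mem_Icc.1 h).2
    · exact Or.inr (Set.mem_Icc.1 h)
  have hbound : ∀ i, i ≤ k → a i ≤ a k := by
    intro i hi
    rcases hforward i hi with h | h
    · omega
    · exact h.2
  -- The value M
  set M := (q - 2) / p with hMdef
  have hMp : M * p ≤ q - 2 := Nat.div_mul_le_self _ _
  have hM1 : 1 ≤ M := (Nat.one_le_div_iff (by omega)).2 (by omega)
  have hMp2 : q - 1 ≤ (M + 1) * p := by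
    have h := Nat.div_add_mod (q - 2) p
    have h2 : (q - 2) % p < p := Nat.mod_lt _ (by omega)
    have e1 : (M + 1) * p = M * p + p := by ring
    have e2 : p * ((q - 2) / p) = M * p := by rw [hMdef]; ring
    omega
  have hMd : M * p + 1 ≤ M * a k := by
    have h1 : M * (p + 1) ≤ M * a k := Nat.mul_le_mul (le_refl _) (by omega)
    have e1 : M * (p + 1) = M * p + M := by ring
    omega
  -- S1 and S2 are all of ℕ
  have hS1 : ∀ n : ℕ, n ∈ S1 k a := by
    obtain ⟨j, hjk, hj1⟩ := havail 1 (Or.inl hp)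
    have hj0 : 1 ≤ j := by
      rcases Nat.eq_zero_or_pos j with h | h
      · rw [h, ha0] at hj1; omega
      · exact h
    intro n
    refine ⟨fun i => if i = j then n else 0, ?_⟩
    rw [Finset.sum_eq_single j]
    · simp [hj1]
    · intro b _ hb; simp [hb]
    · intro hjmem; exact absurd (Finset.mem_Icc.2 ⟨hj0, hjk⟩) hjmem
  have hS2 : ∀ n : ℕ, n ∈ S2 k a := by
    obtain ⟨j, hjk, hj1⟩ := havail (a k - 1) (Or.inr ⟨by omega, by omega⟩)
    have hjlt : j < k := by
      rcases Nat.lt_or_ge j k with h | h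
      · exact h
      · exfalso
        have hjeq : j = k := le_antisymm hjk h
        rw [hjeq] at hj1
        omega
    intro n
    refine ⟨fun i => if i = j then n else 0, ?_⟩
    rw [Finset.sum_eq_single j]
    · have hone : a k - a j = 1 := by omega
      simp [hone]
    · intro b _ hb; simp [hb]
    · intro hjm; exact absurd (Finset.mem_range.2 hjlt) hjm
  -- upper bound
  have hub : ∀ z ∈ ({z : ℤ | ∃ u ∈ S' k a \ S k a, z = (deg k a u : ℤ) + 1} ∪
        {z : ℤ | ∃ u ∈ T k a, z = degZ k a u + 2}), z ≤ (M : ℤ) + 1 := by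
    rintro z (⟨u, ⟨hu', huS⟩, rfl⟩ | ⟨u, hu, rfl⟩)
    · -- S' \ S part
      obtain ⟨P, h0, _⟩ := hu'
      obtain ⟨x, hx1, hx2⟩ := S_total hbound h0
      have hfst : (u + P • e k a 0).1 = u.1 := by simp [e]
      have hsnd : (u + P • e k a 0).2 = u.2 + P * a k := by simp [e]
      rw [hfst, hsnd] at hx2
      set N := ∑ i ∈ Finset.range (k+1), x i with hN
      have hPN : P ≤ N := by
        by_contra hc
        push_neg at hc
        have := (Nat.mul_lt_mul_right hdpos).2 hc
        omega
      have hdegeq : u.1 + u.2 = (N - P) * a k := by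
        have e1 : (N - P) * a k + P * a k = N * a k := by
          rw [← Nat.add_mul]
          congr 1
          omega
        omega
      have hdegu : deg k a u = N - P := by
        rw [deg, hdegeq, Nat.mul_div_cancel _ hdpos]
      have hmle : N - P ≤ M := by
        by_contra hc
        push_neg at hc
        apply huS
        have hq1 : q ≤ (N - P) * p + 1 := by
          have hmm : (M + 1) * p ≤ (N - P) * p := Nat.mul_le_mul (by omega) (le_refl _)
          omega
        have hu1 : u.1 ≤ (N - P) * a k := by omega
        obtain ⟨j, hjle, hj1, hj2⟩ := cover p q hd (N - P) u.1 hu1 hq1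
        have hmem := rep_mem p q hp (by omega) hpltq havail (N - P) j u.1 hjle hj1 hj2
        have hu2 : (N - P) * a k - u.1 = u.2 := by omega
        rwa [hu2, Prod.mk.eta] at hmem
      rw [hdegu]
      have : ((N - P : ℕ) : ℤ) ≤ (M : ℤ) := by exact_mod_cast hmle
      omega
    · -- T part
      obtain ⟨hdvd, h1, h2⟩ := hu
      have hu1 : u.1 ≤ -1 := by
        by_contra hc
        push_neg at hc
        exact h1 u.1.toNat (hS1 _) (Int.toNat_of_nonneg (by omega))
      have hu2 : u.2 ≤ -1 := by
        by_contra hc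
        push_neg at hc
        exact h2 u.2.toNat (hS2 _) (Int.toNat_of_nonneg (by omega))
      obtain ⟨t, ht⟩ := hdvd
      have hdegZ : degZ k a u = t := by
        rw [degZ, ht, Int.mul_ediv_cancel_left t (by exact_mod_cast hdpos.ne')]
      have hts : t ≤ -1 := by
        by_contra hc
        push_neg at hc
        have hnn : 0 ≤ (a k : ℤ) * t := mul_nonneg (by positivity) (by omega)
        omega
      rw [hdegZ]
      have hM0 : (1 : ℤ) ≤ (M : ℤ) := by exact_mod_cast hM1
      omega
  -- witness
  have hdegwit : deg k a (M * p + 1, M * a k - (M * p + 1)) = M := by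
    show (M * p + 1 + (M * a k - (M * p + 1))) / a k = M
    have hsum : M * p + 1 + (M * a k - (M * p + 1)) = M * a k := by omega
    rw [hsum, Nat.mul_div_cancel _ hdpos]
  have hwit : ((M : ℤ) + 1) ∈ ({z : ℤ | ∃ u ∈ S' k a \ S k a, z = (deg k a u : ℤ) + 1} ∪
        {z : ℤ | ∃ u ∈ T k a, z = degZ k a u + 2}) := by
    refine Or.inl ⟨(M * p + 1, M * a k - (M * p + 1)), ⟨⟨1, ?_, ?_⟩, ?_⟩, ?_⟩
    · -- + 1 • e 0 ∈ S
      have hmem := rep_mem p q hp (by omega) hpltq havail (M+1) 0 (M*p+1) (Nat.zero_le _)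
        (by simp) (by simp [Nat.succ_mul]; omega)
      have heq : (M * p + 1, M * a k - (M * p + 1)) + 1 • e k a 0
          = (M * p + 1, (M+1) * a k - (M * p + 1)) := by
        have e3 : (M+1) * a k = M * a k + a k := by ring
        rw [Prod.ext_iff]
        constructor
        · simp [e]
        · simp only [e, Prod.snd_add, one_smul]
          omega
      rw [heq]; exact hmem
    · -- + 1 • e d ∈ S
      have e3 : (M+1) * a k = M * a k + a k := by ring
      have hs' : M * p + 1 + a k ≤ (M+1) * a k := by omega
      have hq' : q ≤ (M+1) * p + 1 := by omega
      obtain ⟨j, hj1, hj2, hj3⟩ := cover p q hd (M+1) (M*p+1+a k) hs' hq'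
      have hmem := rep_mem p q hp (by omega) hpltq havail (M+1) j _ hj1 hj2 hj3
      have heq : (M * p + 1, M * a k - (M * p + 1)) + 1 • e k a (a k)
          = (M * p + 1 + a k, (M+1) * a k - (M * p + 1 + a k)) := by
        rw [Prod.ext_iff]
        constructor
        · simp [e]
        · simp only [e, Prod.snd_add, one_smul]
          omega
      rw [heq]; exact hmem
    · -- not in S
      intro hS
      obtain ⟨x, hx1, hx2⟩ := S_total hbound hS
      have hx1' : M * p + 1 = ∑ i ∈ Finset.range (k+1), x i * a i := hx1
      have hx2' : M * p + 1 + (M * a k - (M * p + 1)) = (∑ i ∈ Finset.range (k+1), x i) * a k := hx2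
      have hNM : (∑ i ∈ Finset.range (k+1), x i) = M := by
        have hMak : M * a k = (∑ i ∈ Finset.range (k+1), x i) * a k := by omega
        exact (Nat.eq_of_mul_eq_mul_right hdpos hMak.symm)
      by_cases hcase : ∃ i ∈ Finset.range (k+1), x i ≠ 0 ∧ q ≤ a i
      · obtain ⟨i, hi, hxi, hqi⟩ := hcase
        have hle : x i * a i ≤ ∑ j ∈ Finset.range (k+1), x j * a j :=
          Finset.single_le_sum (f := fun j => x j * a j) (fun j _ => Nat.zero_le _) hi
        have hge : q ≤ x i * a i := by
          calc q ≤ a i := hqi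
          _ ≤ x i * a i := Nat.le_mul_of_pos_left _ (by omega)
        omega
      · push_neg at hcase
        have hle : ∀ i ∈ Finset.range (k+1), x i * a i ≤ x i * p := by
          intro i hi
          rcases Nat.eq_zero_or_pos (x i) with h | h
          · simp [h]
          · have hlt := hcase i hi (by omega)
            rcases hforward i (Nat.lt_succ_iff.1 (Finset.mem_range.1 hi)) with hh | hh
            · exact Nat.mul_le_mul (le_refl _) hh
            · omega
        have hsum : (∑ i ∈ Finset.range (k+1), x i * a i)
            ≤ (∑ i ∈ Finset.range (k+1), x i) * p := by
          rw [Finset.sum_mul]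
          exact Finset.sum_le_sum hle
        rw [hNM] at hsum
        omega
    · rw [hdegwit]
  -- ceiling computation
  have hp' : (0 : ℚ) < (p : ℚ) := by exact_mod_cast hp
  have hceil : ⌈((q : ℚ) - 1) / (p : ℚ)⌉ = (M : ℤ) + 1 := by
    rw [Int.ceil_eq_iff]
    constructor
    · rw [lt_div_iff₀ hp']
      have h1 : M * p + 2 ≤ q := by omega
      have h1' : ((M : ℚ)) * p + 2 ≤ q := by exact_mod_cast h1
      push_cast
      linarith
    · rw [div_le_iff₀ hp']
      have h2 : q ≤ (M + 1) * p + 1 := by omega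
      have h2' : (q : ℚ) ≤ ((M : ℚ) + 1) * p + 1 := by exact_mod_cast h2
      push_cast
      linarith
  rw [hceil]
  exact IsGreatest.csSup_eq ⟨hwit, fun z hz => hub z hz⟩

end ProjMonomialCurve
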